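/- arXiv:2009.02821 — 3 statements merged into one kernel-verified Lean document; each statement's English description precedes it below -/
import Mathlib

section
/- Let n ≥ 1, let Ω_ε ⊆ ℝⁿ be an open set of finite Lebesgue measure, let W : ℝ → ℝ be C¹ satisfying the growth assumptions with constants C₁ > 0, C₂, C₃, C₃', C₄ ∈ ℝ and exponent p ≥ 2, and let η₁ > 0, η₂ < p·η₁. Then there exist ε₀ > 0 and constants A₁ > 0, A₂ > 0, depending only on η₁, η₂, p, C₁, C₂, C₃, C₄, such that for every ε with 0 < ε ≤ ε₀ and every C² function u : ℝⁿ → ℝ with compact support contained in Ω_ε, one has F_ε|_{Ω_ε}(u) ≥ ∫_{Ω_ε} [ (1/(4ε))·(−ε·Δu + ε^{−1}·W'(u))² + (η₁·ε/2)·|∇u|² + (A₁/ε)·|u|^p ] dx − (A₂/ε)·|Ω_ε|, where |Ω_ε| denotes the Lebesgue measure of Ω_ε. -/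
/-!
Integration by parts gives `∫ (|∇u|² + u Δu) = 0`; adding `η₁ ε` times it to `F_ε` turns the
gradient term positive and, with `q = -εΔu + ε⁻¹ W'(u)`, produces `ε⁻¹ (η₁ W'(u) u - η₁ ε u q)`.
The growth bounds and `η₂ < p η₁` give `η₁ W'(u) u - η₂ W(u) ≥ C₁ (p η₁ - η₂) |u|^p - const`,
and Young's inequality absorbs `η₁ ε u q` into `q² / 4` at the cost of `ε² η₁² u²`, which is at
most `A₁ (|u|^p + 1)` once `ε ≤ min 1 (A₁ / η₁²)`, because `p ≥ 2`.
-/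

open MeasureTheory

/-- Partial derivative of `u` in the `i`-th coordinate direction. -/
noncomputable def pd {n : ℕ} (i : Fin n) (u : EuclideanSpace ℝ (Fin n) → ℝ)
    (x : EuclideanSpace ℝ (Fin n)) : ℝ :=
  fderiv ℝ u x (EuclideanSpace.single i 1)

/-- Laplacian of `u : ℝⁿ → ℝ`, as the sum of second partial derivatives. -/
noncomputable def lap {n : ℕ} (u : EuclideanSpace ℝ (Fin n) → ℝ)
    (x : EuclideanSpace ℝ (Fin n)) : ℝ :=
  ∑ i, pd i (fun y => pd i u y) x

/-- Squared gradient `|∇u|²`. -/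
noncomputable def gradSq {n : ℕ} (u : EuclideanSpace ℝ (Fin n) → ℝ)
    (x : EuclideanSpace ℝ (Fin n)) : ℝ :=
  ∑ i, (pd i u x) ^ 2

/-- The Functionalized Cahn–Hilliard energy of `u` restricted to `D`. -/
noncomputable def FCH {n : ℕ} (ε η₁ η₂ : ℝ) (W : ℝ → ℝ)
    (D : Set (EuclideanSpace ℝ (Fin n))) (u : EuclideanSpace ℝ (Fin n) → ℝ) : ℝ :=
  ∫ x in D, ((1 / (2 * ε)) * (-(ε * lap u x) + ε⁻¹ * deriv W (u x)) ^ 2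
    - ((η₁ * ε / 2) * gradSq u x + (η₂ / ε) * W (u x)))

section Laplacian

variable {n : ℕ} {u : EuclideanSpace ℝ (Fin n) → ℝ}

theorem ContDiff.pd {m : WithTop ℕ∞} (hu : ContDiff ℝ (m + 1) u) (i : Fin n) :
    ContDiff ℝ m (pd i u) :=
  (hu.fderiv_right le_rfl).clm_apply contDiff_const

theorem tsupport_pd_subset (i : Fin n) : tsupport (pd i u) ⊆ tsupport u :=
  tsupport_fderiv_apply_subset ℝ _

theorem HasCompactSupport.pd (hu : HasCompactSupport u) (i : Fin n) :
    HasCompactSupport (pd i u) :=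
  hu.fderiv_apply ℝ _

theorem continuous_lap (hu : ContDiff ℝ 2 u) : Continuous (lap u) :=
  continuous_finsetSum _ fun i _ => ((hu.pd (m := 1) i).pd (m := 0) i).continuous

theorem continuous_gradSq (hu : ContDiff ℝ 1 u) : Continuous (gradSq u) :=
  continuous_finsetSum _ fun i _ => ((hu.pd (m := 0) i).continuous).pow 2

theorem lap_eq_zero_of_notMem_tsupport {x : EuclideanSpace ℝ (Fin n)} (hx : x ∉ tsupport u) :
    lap u x = 0 :=
  Finset.sum_eq_zero fun i _ => image_eq_zero_of_notMem_tsupport fun h =>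
    hx (tsupport_pd_subset i (tsupport_pd_subset i h))

theorem gradSq_eq_zero_of_notMem_tsupport {x : EuclideanSpace ℝ (Fin n)} (hx : x ∉ tsupport u) :
    gradSq u x = 0 :=
  Finset.sum_eq_zero fun i _ => by
    rw [image_eq_zero_of_notMem_tsupport fun h => hx (tsupport_pd_subset i h), sq, mul_zero]

theorem integral_mul_pd_pd (hu : ContDiff ℝ 2 u) (hc : HasCompactSupport u) (i : Fin n) :
    ∫ x, u x * pd i (pd i u) x = -∫ x, pd i u x ^ 2 := by
  have hu₁ : ContDiff ℝ 1 (pd i u) := hu.pd (m := 1) i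
  simp only [sq]
  exact integral_mul_fderiv_eq_neg_fderiv_mul_of_integrable
    ((hu₁.continuous.mul hu₁.continuous).integrable_of_hasCompactSupport (hc.pd i).mul_right)
    ((hu.continuous.mul (hu₁.pd (m := 0) i).continuous).integrable_of_hasCompactSupport
      hc.mul_right)
    ((hu.continuous.mul hu₁.continuous).integrable_of_hasCompactSupport hc.mul_right)
    (fun x _ => (hu.differentiable (by norm_num)) x)
    (fun x _ => (hu₁.differentiable one_ne_zero) x)

theorem integral_mul_lap (hu : ContDiff ℝ 2 u) (hc : HasCompactSupport u) :
    ∫ x, u x * lap u x = -∫ x, gradSq u x := by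
  have hsq : ∀ i, Integrable fun x => pd i u x ^ 2 := fun i => by
    have hpd := (hu.pd (m := 1) i).continuous
    simpa only [sq, Pi.mul_def] using
      (hpd.mul hpd).integrable_of_hasCompactSupport (hc.pd i).mul_right
  have hmul : ∀ i, Integrable fun x => u x * pd i (pd i u) x := fun i =>
    (hu.continuous.mul ((hu.pd (m := 1) i).pd (m := 0) i).continuous)
      |>.integrable_of_hasCompactSupport hc.mul_right
  simp only [lap, gradSq, Finset.mul_sum]
  rw [integral_finsetSum _ fun i _ => hmul i, integral_finsetSum _ fun i _ => hsq i,
    ← Finset.sum_neg_distrib]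
  exact Finset.sum_congr rfl fun i _ => integral_mul_pd_pd hu hc i

theorem setIntegral_gradSq_add_mul_lap (hu : ContDiff ℝ 2 u) (hc : HasCompactSupport u)
    {s : Set (EuclideanSpace ℝ (Fin n))} (hs : tsupport u ⊆ s) :
    ∫ x in s, (gradSq u x + u x * lap u x) = 0 := by
  rw [setIntegral_eq_integral_of_forall_compl_eq_zero fun x hx => by
      rw [gradSq_eq_zero_of_notMem_tsupport (fun h => hx (hs h)), zero_add,
        image_eq_zero_of_notMem_tsupport (fun h => hx (hs h)), zero_mul],
    integral_add, integral_mul_lap hu hc, add_neg_cancel]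
  · exact (continuous_gradSq (hu.of_le (by norm_num))).integrable_of_hasCompactSupport
      (hc.mono' fun x hx => by_contra fun h => hx (gradSq_eq_zero_of_notMem_tsupport h))
  · exact (hu.continuous.mul (continuous_lap hu)).integrable_of_hasCompactSupport hc.mul_right

theorem integrableOn_comp_lap_gradSq (hu : ContDiff ℝ 2 u) (hc : HasCompactSupport u)
    {F : ℝ × ℝ × ℝ → ℝ} (hF : Continuous F) {s : Set (EuclideanSpace ℝ (Fin n))}
    (hs : volume s ≠ ⊤) : IntegrableOn (fun x => F (u x, lap u x, gradSq u x)) s := by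
  have hcont : Continuous fun x => F (u x, lap u x, gradSq u x) - F 0 :=
    (hF.comp (hu.continuous.prodMk ((continuous_lap hu).prodMk
      (continuous_gradSq (hu.of_le (by norm_num)))))).sub continuous_const
  have hsupp : HasCompactSupport fun x => F (u x, lap u x, gradSq u x) - F 0 :=
    hc.mono' fun x hx => by_contra fun h => hx <| by
      simp only [image_eq_zero_of_notMem_tsupport h, lap_eq_zero_of_notMem_tsupport h,
        gradSq_eq_zero_of_notMem_tsupport h, Prod.mk_zero_zero, sub_self]
  simpa only [Pi.add_def, sub_add_cancel] using
    (hcont.integrable_of_hasCompactSupport hsupp).integrableOn.add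
      (integrableOn_const (C := F 0) hs)

end Laplacian

theorem sq_le_abs_rpow_add_one {p : ℝ} (hp : 2 ≤ p) (t : ℝ) : t ^ 2 ≤ |t| ^ p + 1 := by
  rcases le_total |t| 1 with ht | ht
  · have : t ^ 2 ≤ 1 := by simpa only [sq_abs] using pow_le_one₀ (n := 2) (abs_nonneg t) ht
    linarith [Real.rpow_nonneg (abs_nonneg t) p]
  · have := Real.rpow_le_rpow_of_exponent_le ht hp
    rw [Real.rpow_two, sq_abs] at this
    linarith

theorem neg_le_sq_div_four_sub_mul {p ε η₁ A t q : ℝ} (hp : 2 ≤ p) (hε : 0 ≤ ε) (hε₁ : ε ≤ 1)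
    (hεA : ε * η₁ ^ 2 ≤ A) : -(A * (|t| ^ p + 1)) ≤ q ^ 2 / 4 - η₁ * ε * t * q := by
  have hA : 0 ≤ A := le_trans (by positivity) hεA
  calc -(A * (|t| ^ p + 1)) ≤ -(A * t ^ 2) := by
        gcongr; exact sq_le_abs_rpow_add_one hp t
    _ ≤ -(ε * η₁ ^ 2 * t ^ 2) := by gcongr
    _ ≤ -(ε ^ 2 * η₁ ^ 2 * t ^ 2) := by
        have : ε ^ 2 ≤ ε := by nlinarith
        gcongr
    _ ≤ q ^ 2 / 4 - η₁ * ε * t * q := by nlinarith [sq_nonneg (q - 2 * ε * η₁ * t)]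

theorem coercive_lower_bound {p C₁ C₂ C₃ C₄ η₁ η₂ t w w' : ℝ} (hη₁ : 0 ≤ η₁)
    (hlow : C₁ * |t| ^ p + C₂ ≤ w) (hup : w ≤ C₁ * |t| ^ p + C₃)
    (hw' : C₁ * p * |t| ^ p + C₄ ≤ w' * t) :
    C₁ * (p * η₁ - η₂) * |t| ^ p - (|η₂| * max |C₂| |C₃| + η₁ * |C₄|)
      ≤ η₁ * (w' * t) - η₂ * w := by
  have hw : |w - C₁ * |t| ^ p| ≤ max |C₂| |C₃| :=
    abs_sub_le_iff.2 ⟨by linarith [le_abs_self C₃, le_max_right |C₂| |C₃|],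
      by linarith [neg_abs_le C₂, le_max_left |C₂| |C₃|]⟩
  have hη₂w : η₂ * (w - C₁ * |t| ^ p) ≤ |η₂| * max |C₂| |C₃| :=
    (le_abs_self _).trans (abs_mul η₂ _ ▸ mul_le_mul_of_nonneg_left hw (abs_nonneg η₂))
  nlinarith [mul_le_mul_of_nonneg_left hw' hη₁, neg_abs_le C₄]

/-- The integrands of `FCH` and of the lower bound, as functions of the values `t, L, G`
of `u, Δu, |∇u|²` at a point. -/
noncomputable def fchDensity (ε η₁ η₂ : ℝ) (W : ℝ → ℝ) (t L G : ℝ) : ℝ :=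
  (1 / (2 * ε)) * (-(ε * L) + ε⁻¹ * deriv W t) ^ 2 - ((η₁ * ε / 2) * G + (η₂ / ε) * W t)

noncomputable def fchLowerDensity (ε η₁ A p : ℝ) (W : ℝ → ℝ) (t L G : ℝ) : ℝ :=
  (1 / (4 * ε)) * (-(ε * L) + ε⁻¹ * deriv W t) ^ 2 + (η₁ * ε / 2) * G + (A / ε) * |t| ^ p

theorem continuous_fchDensity {W : ℝ → ℝ} (hW : ContDiff ℝ 1 W) (ε η₁ η₂ : ℝ) :
    Continuous fun v : ℝ × ℝ × ℝ => fchDensity ε η₁ η₂ W v.1 v.2.1 v.2.2 := by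
  have := hW.continuous
  have := hW.continuous_deriv le_rfl
  unfold fchDensity
  fun_prop

theorem continuous_fchLowerDensity {W : ℝ → ℝ} (hW : ContDiff ℝ 1 W) (ε η₁ A : ℝ) {p : ℝ}
    (hp : 0 ≤ p) :
    Continuous fun v : ℝ × ℝ × ℝ => fchLowerDensity ε η₁ A p W v.1 v.2.1 v.2.2 := by
  have := hW.continuous_deriv le_rfl
  unfold fchLowerDensity
  fun_prop (disch := exact Or.inr hp)

theorem fchLowerDensity_le {W : ℝ → ℝ} {p C₁ C₂ C₃ C₄ η₁ η₂ ε A₁ A₂ t L G : ℝ} (hp : 2 ≤ p)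
    (hη₁ : 0 ≤ η₁) (hε : 0 < ε) (hε₁ : ε ≤ 1) (hεA : ε * η₁ ^ 2 ≤ A₁)
    (hA₁ : 2 * A₁ ≤ C₁ * (p * η₁ - η₂))
    (hA₂ : A₁ + (|η₂| * max |C₂| |C₃| + η₁ * |C₄|) ≤ A₂)
    (hlow : C₁ * |t| ^ p + C₂ ≤ W t) (hup : W t ≤ C₁ * |t| ^ p + C₃)
    (hW' : C₁ * p * |t| ^ p + C₄ ≤ deriv W t * t) :
    fchLowerDensity ε η₁ A₁ p W t L G
      ≤ fchDensity ε η₁ η₂ W t L G + (A₂ / ε + η₁ * ε * (G + t * L)) := by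
  obtain ⟨q, rfl⟩ : ∃ q, L = (ε⁻¹ * deriv W t - q) / ε :=
    ⟨-(ε * L) + ε⁻¹ * deriv W t, by field_simp; ring⟩
  have key : fchDensity ε η₁ η₂ W t ((ε⁻¹ * deriv W t - q) / ε) G
      + (A₂ / ε + η₁ * ε * (G + t * ((ε⁻¹ * deriv W t - q) / ε)))
      - fchLowerDensity ε η₁ A₁ p W t ((ε⁻¹ * deriv W t - q) / ε) G
      = ε⁻¹ * (q ^ 2 / 4 - η₁ * ε * t * q + (η₁ * (deriv W t * t) - η₂ * W t)
        - A₁ * |t| ^ p + A₂) := by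
    unfold fchDensity fchLowerDensity
    field_simp
    ring
  have hyoung := neg_le_sq_div_four_sub_mul (q := q) (t := t) hp hε.le hε₁ hεA
  have hcoer := coercive_lower_bound (η₂ := η₂) hη₁ hlow hup hW'
  have habs : 0 ≤ |t| ^ p := by positivity
  have hscaled : 0 ≤ ε⁻¹ * (q ^ 2 / 4 - η₁ * ε * t * q + (η₁ * (deriv W t * t) - η₂ * W t)
      - A₁ * |t| ^ p + A₂) := by
    apply mul_nonneg (by positivity)
    nlinarith
  linarith

theorem setIntegral_sub_le_of_le_add {X : Type*} [MeasurableSpace X] {μ : Measure X} {s : Set X}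
    {f g d : X → ℝ} {c a : ℝ} (hf : IntegrableOn f s μ) (hg : IntegrableOn g s μ)
    (hd : IntegrableOn d s μ) (hs : μ s ≠ ⊤) (hd₀ : ∫ x in s, d x ∂μ = 0)
    (hfg : ∀ x, f x ≤ g x + (c + a * d x)) :
    ∫ x in s, f x ∂μ - c * μ.real s ≤ ∫ x in s, g x ∂μ := by
  have hc : IntegrableOn (fun _ => c) s μ := integrableOn_const hs
  have hcd : IntegrableOn (fun x => c + a * d x) s μ := hc.add (hd.const_mul a)
  have : ∫ x in s, f x ∂μ ≤ ∫ x in s, g x + (c + a * d x) ∂μ :=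
    integral_mono hf (hg.add hcd) hfg
  rw [integral_add hg hcd, integral_add hc (hd.const_mul a), integral_const_mul, hd₀,
    setIntegral_const, smul_eq_mul] at this
  linarith

theorem stmt_1_general (n : ℕ) (Ωε : Set (EuclideanSpace ℝ (Fin n)))
    (hΩfin : volume Ωε < ⊤)
    (W : ℝ → ℝ) (hW : ContDiff ℝ 1 W)
    (p C₁ C₂ C₃ C₄ : ℝ) (hp : 2 ≤ p) (hC₁ : 0 < C₁)
    (hWlow : ∀ v : ℝ, C₁ * |v| ^ p + C₂ ≤ W v)
    (hWup : ∀ v : ℝ, W v ≤ C₁ * |v| ^ p + C₃)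
    (hW'u : ∀ v : ℝ, C₁ * p * |v| ^ p + C₄ ≤ deriv W v * v)
    (η₁ η₂ : ℝ) (hη₁ : 0 < η₁) (hη₂ : η₂ < p * η₁) :
    ∃ ε₀ > (0 : ℝ), ∃ A₁ > (0 : ℝ), ∃ A₂ > (0 : ℝ), ∀ ε : ℝ, 0 < ε → ε ≤ ε₀ →
      ∀ u : EuclideanSpace ℝ (Fin n) → ℝ, ContDiff ℝ 2 u → HasCompactSupport u →
        tsupport u ⊆ Ωε →
        (∫ x in Ωε, ((1 / (4 * ε)) * (-(ε * lap u x) + ε⁻¹ * deriv W (u x)) ^ 2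
            + (η₁ * ε / 2) * gradSq u x + (A₁ / ε) * |u x| ^ p))
          - (A₂ / ε) * (volume Ωε).toReal
        ≤ FCH ε η₁ η₂ W Ωε u := by
  set A₁ := C₁ * (p * η₁ - η₂) / 2 with hA₁_def
  have hA₁ : 0 < A₁ := by have := sub_pos.2 hη₂; positivity
  set A₂ := A₁ + (|η₂| * max |C₂| |C₃| + η₁ * |C₄|) + 1 with hA₂_def
  have hA₂ : 0 < A₂ := by positivity
  refine ⟨min 1 (A₁ / η₁ ^ 2), by positivity, A₁, hA₁, A₂, hA₂, fun ε hε hεε₀ u hu hc hΩ => ?_⟩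
  have hεA : ε * η₁ ^ 2 ≤ A₁ := (le_div_iff₀ (by positivity)).1 (hεε₀.trans (min_le_right _ _))
  exact setIntegral_sub_le_of_le_add
    (f := fun x => fchLowerDensity ε η₁ A₁ p W (u x) (lap u x) (gradSq u x))
    (g := fun x => fchDensity ε η₁ η₂ W (u x) (lap u x) (gradSq u x))
    (integrableOn_comp_lap_gradSq hu hc (continuous_fchLowerDensity hW ε η₁ A₁ (by linarith))
      hΩfin.ne)
    (integrableOn_comp_lap_gradSq hu hc (continuous_fchDensity hW ε η₁ η₂) hΩfin.ne)
    (integrableOn_comp_lap_gradSq hu hc (F := fun v => v.2.2 + v.1 * v.2.1) (by fun_prop)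
      hΩfin.ne)
    hΩfin.ne (setIntegral_gradSq_add_mul_lap hu hc hΩ)
    fun x => fchLowerDensity_le hp hη₁.le hε (hεε₀.trans (min_le_left _ _)) hεA
      (by rw [hA₁_def]; linarith) (by rw [hA₂_def]; linarith) (hWlow _) (hWup _) (hW'u _)

/-- lower bound for the FCH energy restricted to a finite-measure open set. -/
theorem stmt_1 (n : ℕ) (hn : 1 ≤ n) (Ωε : Set (EuclideanSpace ℝ (Fin n)))
    (hΩo : IsOpen Ωε) (hΩfin : volume Ωε < ⊤)
    (W : ℝ → ℝ) (hW : ContDiff ℝ 1 W)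
    (p C₁ C₂ C₃ C₃' C₄ : ℝ) (hp : 2 ≤ p) (hC₁ : 0 < C₁)
    (hWlow : ∀ v : ℝ, C₁ * |v| ^ p + C₂ ≤ W v)
    (hWup : ∀ v : ℝ, W v ≤ C₁ * |v| ^ p + C₃)
    (hW' : ∀ v : ℝ, |deriv W v| ≤ C₁ * p * |v| ^ (p - 1) + C₃')
    (hW'u : ∀ v : ℝ, C₁ * p * |v| ^ p + C₄ ≤ deriv W v * v)
    (η₁ η₂ : ℝ) (hη₁ : 0 < η₁) (hη₂ : η₂ < p * η₁) :
    ∃ ε₀ > (0 : ℝ), ∃ A₁ > (0 : ℝ), ∃ A₂ > (0 : ℝ), ∀ ε : ℝ, 0 < ε → ε ≤ ε₀ →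
      ∀ u : EuclideanSpace ℝ (Fin n) → ℝ, ContDiff ℝ 2 u → HasCompactSupport u →
        tsupport u ⊆ Ωε →
        (∫ x in Ωε, ((1 / (4 * ε)) * (-(ε * lap u x) + ε⁻¹ * deriv W (u x)) ^ 2
            + (η₁ * ε / 2) * gradSq u x + (A₁ / ε) * |u x| ^ p))
          - (A₂ / ε) * (volume Ωε).toReal
        ≤ FCH ε η₁ η₂ W Ωε u :=
  stmt_1_general n Ωε hΩfin W hW p C₁ C₂ C₃ C₄ hp hC₁ hWlow hWup hW'u η₁ η₂ hη₁ hη₂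
end

section
/- Let n ≥ 2, ℓ > 0, let Q ⊂ ℝ^{n−1} be a bounded measurable set, and let W : ℝ → ℝ be C¹ with W(0) = 0. Let u : ℝ^{n−1} × ℝ → ℝ be C², and suppose that for every s ∈ Q one has u(s, −ℓ) = u(s, ℓ) = 0 and (∂u/∂z)(s, −ℓ) = (∂u/∂z)(s, ℓ) = 0. Then ∫_{Q×(−ℓ,ℓ)} | (1/2)·(∂u/∂z)² − W(u) | ds dz ≤ 2ℓ · ‖−∂²u/∂z² + W'(u)‖_{L²(Q×(−ℓ,ℓ))} · ‖∂u/∂z‖_{L²(Q×(−ℓ,ℓ))}. -/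
/-!
On each fibre `{s} × (-ℓ, ℓ)` the defect `φ = ½ (∂_z u)² - W(u)` vanishes at `z = -ℓ` (by the
boundary conditions and `W 0 = 0`), and its `z`-derivative is `-g ∂_z u` with
`g = -∂²_z u + W'(u)`. Hence `|φ| ≤ ∫ |g ∂_z u|` along the fibre, and integrating over the fibre
(of length `2ℓ`) and then over `Q` bounds `∫ |φ|` by `2ℓ ∫ |g ∂_z u|`, to which Cauchy–Schwarz
applies.
-/

open MeasureTheory

/-- Normal partial derivative `∂u/∂z` in the product coordinates `(s, z)`. -/
noncomputable def pdz {m : ℕ} (u : (Fin m → ℝ) × ℝ → ℝ) (x : (Fin m → ℝ) × ℝ) : ℝ :=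
  fderiv ℝ u x (0, 1)

/-- The `L²` norm of `g` over a set `Ω`. -/
noncomputable def l2norm {m : ℕ} (Ω : Set ((Fin m → ℝ) × ℝ)) (g : (Fin m → ℝ) × ℝ → ℝ) : ℝ :=
  Real.sqrt (∫ x in Ω, (g x) ^ 2)

open Set

theorem Continuous.integrableOn_of_isBounded {X E : Type*} [MetricSpace X] [ProperSpace X]
    [MeasurableSpace X] [OpensMeasurableSpace X] [NormedAddCommGroup E] {μ : Measure X}
    [IsFiniteMeasureOnCompacts μ] {f : X → E} {s : Set X} (hf : Continuous f)
    (hs : Bornology.IsBounded s) : IntegrableOn f s μ :=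
  (hf.continuousOn.integrableOn_compact hs.isCompact_closure).mono_set subset_closure

theorem setIntegral_prod_mono {α β : Type*} [MeasurableSpace α] [MeasurableSpace β]
    {μ : Measure α} {ν : Measure β} [SFinite μ] [SFinite ν] {F G : α × β → ℝ}
    {s : Set α} {t : Set β} (hs : MeasurableSet s) (hF : IntegrableOn F (s ×ˢ t) (μ.prod ν))
    (hG : IntegrableOn G (s ×ˢ t) (μ.prod ν))
    (h : ∀ x ∈ s, ∫ y in t, F (x, y) ∂ν ≤ ∫ y in t, G (x, y) ∂ν) :
    ∫ p in s ×ˢ t, F p ∂μ.prod ν ≤ ∫ p in s ×ˢ t, G p ∂μ.prod ν := by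
  have inner_integrableOn {H : α × β → ℝ} (hH : IntegrableOn H (s ×ˢ t) (μ.prod ν)) :
      IntegrableOn (fun x => ∫ y in t, H (x, y) ∂ν) s μ := by
    rw [IntegrableOn, ← Measure.prod_restrict] at hH
    exact hH.integral_prod_left
  rw [setIntegral_prod F hF, setIntegral_prod G hG]
  exact setIntegral_mono_on (inner_integrableOn hF) (inner_integrableOn hG) hs h

theorem abs_le_setIntegral_abs_deriv {f f' : ℝ → ℝ} {a b z : ℝ}
    (hderiv : ∀ t ∈ Icc a b, HasDerivAt f (f' t) t) (hint : IntegrableOn f' (Icc a b))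
    (ha : f a = 0) (hz : z ∈ Icc a b) : |f z| ≤ ∫ t in Ioo a b, |f' t| := by
  have hsub : uIcc a z ⊆ Icc a b := by
    rw [uIcc_of_le hz.1]; exact Icc_subset_Icc_right hz.2
  have hftc : ∫ t in a..z, f' t = f z - f a :=
    intervalIntegral.integral_eq_sub_of_hasDerivAt (fun t ht => hderiv t (hsub ht))
      ((hint.mono_set hsub).intervalIntegrable)
  calc |f z| = |∫ t in a..z, f' t| := by rw [hftc, ha, sub_zero]
    _ ≤ ∫ t in a..z, |f' t| := intervalIntegral.abs_integral_le_integral_abs hz.1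
    _ = ∫ t in Ioc a z, |f' t| := intervalIntegral.integral_of_le hz.1
    _ ≤ ∫ t in Ioc a b, |f' t| :=
        setIntegral_mono_set (IntegrableOn.mono_set hint.abs Ioc_subset_Icc_self)
          (Filter.Eventually.of_forall fun t => abs_nonneg (f' t))
          (Ioc_subset_Ioc_right hz.2).eventuallyLE
    _ = ∫ t in Ioo a b, |f' t| := integral_Ioc_eq_integral_Ioo

theorem setIntegral_abs_le_mul_setIntegral_abs_deriv {f f' : ℝ → ℝ} {a b : ℝ} (hab : a ≤ b)
    (hderiv : ∀ t ∈ Icc a b, HasDerivAt f (f' t) t) (hint : IntegrableOn f' (Icc a b))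
    (ha : f a = 0) : ∫ z in Ioo a b, |f z| ≤ (b - a) * ∫ t in Ioo a b, |f' t| := by
  have hbound : ∀ z ∈ Ioo a b, ‖|f z|‖ ≤ ∫ t in Ioo a b, |f' t| := fun z hz => by
    rw [Real.norm_eq_abs, abs_abs]
    exact abs_le_setIntegral_abs_deriv hderiv hint ha (Ioo_subset_Icc_self hz)
  calc ∫ z in Ioo a b, |f z| ≤ ‖∫ z in Ioo a b, |f z|‖ := Real.le_norm_self _
    _ ≤ (∫ t in Ioo a b, |f' t|) * volume.real (Ioo a b) :=
        norm_setIntegral_le_of_norm_le_const measure_Ioo_lt_top hbound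
    _ = (b - a) * ∫ t in Ioo a b, |f' t| := by rw [Real.volume_real_Ioo_of_le hab, mul_comm]

theorem integral_abs_mul_le_l2norm_mul_l2norm {m : ℕ} {Ω : Set ((Fin m → ℝ) × ℝ)}
    {f g : (Fin m → ℝ) × ℝ → ℝ} (hf : MemLp f 2 (volume.restrict Ω))
    (hg : MemLp g 2 (volume.restrict Ω)) :
    ∫ x in Ω, |f x * g x| ≤ l2norm Ω f * l2norm Ω g := by
  have habs_sq (F : (Fin m → ℝ) × ℝ → ℝ) : ∫ x in Ω, |F x| ^ (2 : ℝ) = ∫ x in Ω, F x ^ 2 := by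
    simp only [Real.rpow_two, sq_abs]
  have hHolder := integral_mul_le_Lp_mul_Lq_of_nonneg (μ := volume.restrict Ω)
    Real.HolderConjugate.two_two (Filter.Eventually.of_forall fun x => abs_nonneg (f x))
    (Filter.Eventually.of_forall fun x => abs_nonneg (g x))
    (by rw [ENNReal.ofReal_ofNat]; exact hf.abs) (by rw [ENNReal.ofReal_ofNat]; exact hg.abs)
  simpa only [abs_mul, habs_sq, l2norm, Real.sqrt_eq_rpow, one_div] using hHolder

section pdz

variable {m : ℕ} {u : (Fin m → ℝ) × ℝ → ℝ}

theorem hasDerivAt_pdz (hu : Differentiable ℝ u) (s : Fin m → ℝ) (z : ℝ) :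
    HasDerivAt (fun t => u (s, t)) (pdz u (s, z)) z :=
  (hu (s, z)).hasFDerivAt.comp_hasDerivAt z ((hasDerivAt_const z s).prodMk (hasDerivAt_id z))

theorem ContDiff.pdz {k : ℕ} (hu : ContDiff ℝ (k + 1) u) : ContDiff ℝ k (pdz u) :=
  (ContinuousLinearMap.apply ℝ ℝ ((0 : Fin m → ℝ), (1 : ℝ))).contDiff.comp
    (hu.fderiv_right (m := k) (by exact_mod_cast le_rfl))

theorem hasDerivAt_equipartitionDefect (hu : ContDiff ℝ 2 u) {W : ℝ → ℝ}
    (hW : Differentiable ℝ W) (s : Fin m → ℝ) (z : ℝ) :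
    HasDerivAt (fun t => 1 / 2 * pdz u (s, t) ^ 2 - W (u (s, t)))
      (-((-pdz (pdz u) (s, z) + deriv W (u (s, z))) * pdz u (s, z))) z := by
  have hu' : HasDerivAt (fun t => u (s, t)) (pdz u (s, z)) z :=
    hasDerivAt_pdz (hu.differentiable (by norm_num)) s z
  have hpdz' : HasDerivAt (fun t => pdz u (s, t)) (pdz (pdz u) (s, z)) z :=
    hasDerivAt_pdz ((hu.pdz (k := 1)).differentiable one_ne_zero) s z
  have hsq : HasDerivAt (fun t => 1 / 2 * pdz u (s, t) ^ 2)
      (1 / 2 * (2 * pdz u (s, z) * pdz (pdz u) (s, z))) z := by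
    simpa using (hpdz'.pow 2).const_mul (1 / 2 : ℝ)
  have hWu : HasDerivAt (fun t => W (u (s, t))) (deriv W (u (s, z)) * pdz u (s, z)) z :=
    (hW _).hasDerivAt.comp z hu'
  exact (hsq.fun_sub hWu).congr_deriv (by ring)

end pdz

theorem stmt_6_general (n : ℕ) (ℓ : ℝ) (hℓ : 0 < ℓ)
    (Q : Set (Fin (n - 1) → ℝ)) (hQm : MeasurableSet Q) (hQb : Bornology.IsBounded Q)
    (W : ℝ → ℝ) (hW : ContDiff ℝ 1 W) (hW0 : W 0 = 0)
    (u : (Fin (n - 1) → ℝ) × ℝ → ℝ) (hu : ContDiff ℝ 2 u)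
    (hbc : ∀ s ∈ Q, u (s, -ℓ) = 0 ∧ u (s, ℓ) = 0 ∧ pdz u (s, -ℓ) = 0 ∧ pdz u (s, ℓ) = 0) :
    (∫ x in Q ×ˢ Set.Ioo (-ℓ) ℓ, |(1 / 2) * (pdz u x) ^ 2 - W (u x)|) ≤
      2 * ℓ * l2norm (Q ×ˢ Set.Ioo (-ℓ) ℓ) (fun x => -(pdz (fun y => pdz u y) x) + deriv W (u x))
        * l2norm (Q ×ˢ Set.Ioo (-ℓ) ℓ) (fun x => pdz u x) := by
  set Ω := Q ×ˢ Ioo (-ℓ) ℓ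
  set g : (Fin (n - 1) → ℝ) × ℝ → ℝ := fun x => -pdz (pdz u) x + deriv W (u x)
  have hΩ : Bornology.IsBounded Ω := hQb.prod (Metric.isBounded_Ioo _ _)
  have hf : Continuous (pdz u) := (hu.pdz (k := 1)).continuous
  have hg : Continuous g :=
    ((hu.pdz (k := 1)).pdz (k := 0)).continuous.neg.add
      ((hW.continuous_deriv le_rfl).comp hu.continuous)
  have hmemLp {F : (Fin (n - 1) → ℝ) × ℝ → ℝ} (hF : Continuous F) :
      MemLp F 2 (volume.restrict Ω) :=
    (memLp_two_iff_integrable_sq hF.aestronglyMeasurable).2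
      ((hF.pow 2).integrableOn_of_isBounded hΩ)
  have hfibre : ∀ s ∈ Q, ∫ z in Ioo (-ℓ) ℓ, |1 / 2 * pdz u (s, z) ^ 2 - W (u (s, z))| ≤
      ∫ z in Ioo (-ℓ) ℓ, 2 * ℓ * |g (s, z) * pdz u (s, z)| := by
    intro s hs
    obtain ⟨hu0, -, hpdz0, -⟩ := hbc s hs
    rw [integral_const_mul, two_mul, ← sub_neg_eq_add ℓ]
    simpa only [abs_neg] using setIntegral_abs_le_mul_setIntegral_abs_deriv (by linarith)
      (fun z _ => hasDerivAt_equipartitionDefect hu (hW.differentiable one_ne_zero) s z)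
      ((hg.mul hf).comp (Continuous.prodMk_right s)).neg.integrableOn_Icc
      (by simp [hu0, hpdz0, hW0])
  calc ∫ x in Ω, |1 / 2 * pdz u x ^ 2 - W (u x)|
      ≤ ∫ x in Ω, 2 * ℓ * |g x * pdz u x| :=
        setIntegral_prod_mono hQm
          (((continuous_const.mul (hf.pow 2)).sub (hW.continuous.comp hu.continuous)).abs
            |>.integrableOn_of_isBounded hΩ)
          ((continuous_const.mul (hg.mul hf).abs).integrableOn_of_isBounded hΩ) hfibre
    _ = 2 * ℓ * ∫ x in Ω, |g x * pdz u x| := integral_const_mul _ _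
    _ ≤ 2 * ℓ * (l2norm Ω g * l2norm Ω (pdz u)) := by
        gcongr
        exact integral_abs_mul_le_l2norm_mul_l2norm (hmemLp hg) (hmemLp hf)
    _ = 2 * ℓ * l2norm Ω g * l2norm Ω (pdz u) := by ring

/-- `L¹` equipartition defect estimate over the slab `Q × (−ℓ, ℓ)`. -/
theorem stmt_6 (n : ℕ) (hn : 2 ≤ n) (ℓ : ℝ) (hℓ : 0 < ℓ)
    (Q : Set (Fin (n - 1) → ℝ)) (hQm : MeasurableSet Q) (hQb : Bornology.IsBounded Q)
    (W : ℝ → ℝ) (hW : ContDiff ℝ 1 W) (hW0 : W 0 = 0)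
    (u : (Fin (n - 1) → ℝ) × ℝ → ℝ) (hu : ContDiff ℝ 2 u)
    (hbc : ∀ s ∈ Q, u (s, -ℓ) = 0 ∧ u (s, ℓ) = 0 ∧ pdz u (s, -ℓ) = 0 ∧ pdz u (s, ℓ) = 0) :
    (∫ x in Q ×ˢ Set.Ioo (-ℓ) ℓ, |(1 / 2) * (pdz u x) ^ 2 - W (u x)|) ≤
      2 * ℓ * l2norm (Q ×ˢ Set.Ioo (-ℓ) ℓ) (fun x => -(pdz (fun y => pdz u y) x) + deriv W (u x))
        * l2norm (Q ×ˢ Set.Ioo (-ℓ) ℓ) (fun x => pdz u x) :=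
  stmt_6_general n ℓ hℓ Q hQm hQb W hW hW0 u hu hbc
end

section
/- Let n ≥ 2, ℓ > 0, let Q ⊂ ℝ^{n−1} be a bounded open set, let p ≥ 2, and let W : ℝ → ℝ be C¹ with |W'(v)| ≤ C₁·p·|v|^{p−1} + C₃' for all v ∈ ℝ, where C₁ > 0 and C₃' ∈ ℝ. Set Ω := Q × (−ℓ, ℓ) ⊂ ℝⁿ and q := max{2, p−1}. Suppose u_k : ℝⁿ → ℝ are C² functions and u* ∈ L^q(Ω) is measurable, with u_k → u* almost everywhere on Ω, ∫_Ω |u_k − u*|^q → 0, and ‖−∂²u_k/∂z² + W'(u_k)‖_{L²(Ω)} → 0 as k → ∞. Then for every C² function φ : ℝⁿ → ℝ with compact support contained in Ω, ∫_Ω ( −u*·(∂²φ/∂z²) + W'(u*)·φ ) ds dz = 0; that is, u* is a distributional solution of the bilayer equation ∂²u/∂z² = W'(u) on Ω. -/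
/-! Integrating by parts twice in `z` turns the weak form of `u_k` into the pairing of its
residual `-∂²u_k/∂z² + W'(u_k)` with `φ`, which Cauchy–Schwarz bounds by the `L²` norm of the
residual, so it tends to `0`. On the other hand the weak form of `u_k` tends to that of `u*`: the
growth bound on `W'` gives `|W'(a) - W'(b)| ≤ C (1 + |b|^q + |a - b|^q)`, so the integrands differ
by at most a fixed integrable function plus a multiple of `|u_k - u*|^q`, and dominated convergence
applies to the part truncated at the fixed function. -/

open MeasureTheory Filter

open Topology

section PartialZ

variable {m : ℕ} {u φ : (Fin m → ℝ) × ℝ → ℝ}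

theorem tsupport_pdz_subset : tsupport (pdz u) ⊆ tsupport u :=
  tsupport_fderiv_apply_subset ℝ (0, 1)

theorem hasCompactSupport_pdz (hu : HasCompactSupport u) : HasCompactSupport (pdz u) :=
  hu.fderiv_apply ℝ (0, 1)

theorem contDiff_pdz {n : WithTop ℕ∞} (hu : ContDiff ℝ (n + 1) u) : ContDiff ℝ n (pdz u) :=
  (hu.fderiv_right le_rfl).clm_apply contDiff_const

theorem continuous_pdz (hu : ContDiff ℝ 1 u) : Continuous (pdz u) :=
  (contDiff_pdz (n := 0) hu).continuous

theorem integral_mul_pdz (hu : ContDiff ℝ 1 u) (hφ : ContDiff ℝ 1 φ) (hφc : HasCompactSupport φ) :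
    ∫ x, u x * pdz φ x = -∫ x, pdz u x * φ x := by
  rw [Measure.volume_eq_prod]
  exact integral_mul_fderiv_eq_neg_fderiv_mul_of_integrable
    (((continuous_pdz hu).mul hφ.continuous).integrable_of_hasCompactSupport hφc.mul_left)
    ((hu.continuous.mul (continuous_pdz hφ)).integrable_of_hasCompactSupport
      (hasCompactSupport_pdz hφc).mul_left)
    ((hu.continuous.mul hφ.continuous).integrable_of_hasCompactSupport hφc.mul_left)
    (fun x _ => hu.differentiable one_ne_zero x) (fun x _ => hφ.differentiable one_ne_zero x)

theorem integral_mul_pdz_pdz (hu : ContDiff ℝ 2 u) (hφ : ContDiff ℝ 2 φ)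
    (hφc : HasCompactSupport φ) :
    ∫ x, u x * pdz (pdz φ) x = ∫ x, pdz (pdz u) x * φ x := by
  rw [integral_mul_pdz (hu.of_le one_le_two) (contDiff_pdz hφ) (hasCompactSupport_pdz hφc),
    integral_mul_pdz (contDiff_pdz hu) (hφ.of_le one_le_two) hφc, neg_neg]

theorem setIntegral_neg_mul_pdz_pdz_add_comp_mul {Ω : Set ((Fin m → ℝ) × ℝ)} {g : ℝ → ℝ}
    (hu : ContDiff ℝ 2 u) (hφ : ContDiff ℝ 2 φ) (hφc : HasCompactSupport φ)
    (hφΩ : tsupport φ ⊆ Ω) (hg : Continuous g) :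
    ∫ x in Ω, (-(u x) * pdz (pdz φ) x + g (u x) * φ x) =
      ∫ x in Ω, (-(pdz (pdz u) x) + g (u x)) * φ x := by
  have hvanish : ∀ x ∉ Ω, φ x = 0 ∧ pdz (pdz φ) x = 0 := fun x hx =>
    ⟨image_eq_zero_of_notMem_tsupport fun h => hx (hφΩ h),
      image_eq_zero_of_notMem_tsupport fun h =>
        hx (hφΩ (tsupport_pdz_subset (tsupport_pdz_subset h)))⟩
  have hint : ∀ {f : (Fin m → ℝ) × ℝ → ℝ}, Continuous f → Integrable fun x => f x * φ x :=
    fun hf => (hf.mul hφ.continuous).integrable_of_hasCompactSupport hφc.mul_left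
  have hgu : Continuous fun x => g (u x) := hg.comp hu.continuous
  rw [setIntegral_eq_integral_of_forall_compl_eq_zero fun x hx => by simp [hvanish x hx],
    setIntegral_eq_integral_of_forall_compl_eq_zero fun x hx => by simp [hvanish x hx]]
  have hu_φzz : Integrable fun x => u x * pdz (pdz φ) x :=
    (hu.continuous.mul (continuous_pdz (contDiff_pdz hφ))).integrable_of_hasCompactSupport
      (hasCompactSupport_pdz (hasCompactSupport_pdz hφc)).mul_left
  simp only [neg_mul, add_mul]
  rw [integral_add hu_φzz.fun_neg (hint hgu),
    integral_add (hint (continuous_pdz (contDiff_pdz hu))).fun_neg (hint hgu),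
    integral_neg, integral_neg, integral_mul_pdz_pdz hu hφ hφc]

end PartialZ

section Integrals

variable {α : Type*} [MeasurableSpace α] {μ : Measure α}

theorem MeasureTheory.MemLp.integrable_abs_rpow [IsFiniteMeasure μ] {v : α → ℝ} {q : ℝ} (hq : 0 ≤ q)
    (hv : MemLp v (ENNReal.ofReal q) μ) : Integrable (fun x => |v x| ^ q) μ := by
  simpa [ENNReal.toReal_ofReal hq] using hv.integrable_norm_rpow'

theorem abs_integral_mul_le_sqrt_mul_sqrt {f g : α → ℝ} (hf : MemLp f 2 μ) (hg : MemLp g 2 μ) :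
    |∫ x, f x * g x ∂μ| ≤ √(∫ x, f x ^ 2 ∂μ) * √(∫ x, g x ^ 2 ∂μ) := by
  have holder := integral_mul_norm_le_Lp_mul_Lq Real.HolderConjugate.two_two
    (by rwa [ENNReal.ofReal_ofNat]) (by rwa [ENNReal.ofReal_ofNat]) (μ := μ) (f := f) (g := g)
  simp only [Real.norm_eq_abs, Real.rpow_two, sq_abs, ← Real.sqrt_eq_rpow] at holder
  calc |∫ x, f x * g x ∂μ| ≤ ∫ x, |f x * g x| ∂μ := abs_integral_le_integral_abs
    _ = ∫ x, |f x| * |g x| ∂μ := by simp only [abs_mul]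
    _ ≤ _ := holder

theorem tendsto_integral_of_abs_sub_le_add {F H : ℕ → α → ℝ} {f G : α → ℝ}
    (hF : ∀ k, Integrable (F k) μ) (hf : Integrable f μ) (hG : Integrable G μ)
    (hG0 : ∀ᵐ x ∂μ, 0 ≤ G x) (hH : ∀ k, Integrable (H k) μ) (hH0 : ∀ k, ∀ᵐ x ∂μ, 0 ≤ H k x)
    (hle : ∀ k, ∀ᵐ x ∂μ, |F k x - f x| ≤ G x + H k x)
    (hlim : ∀ᵐ x ∂μ, Tendsto (fun k => F k x) atTop (𝓝 (f x)))
    (hHlim : Tendsto (fun k => ∫ x, H k x ∂μ) atTop (𝓝 0)) :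
    Tendsto (fun k => ∫ x, F k x ∂μ) atTop (𝓝 (∫ x, f x ∂μ)) := by
  -- `|F k - f| ≤ min |F k - f| G + H k`, and the truncated part is dominated by `G`.
  set D : ℕ → α → ℝ := fun k x => min |F k x - f x| (G x)
  have hD : ∀ k, Integrable (D k) μ := fun k => ((hF k).sub hf).abs.inf hG
  have hDlim : Tendsto (fun k => ∫ x, D k x ∂μ) atTop (𝓝 0) := by
    have := tendsto_integral_of_dominated_convergence (f := fun _ => 0) G
      (fun k => (hD k).aestronglyMeasurable) hG
      (fun k => by
        filter_upwards [hG0] with x hx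
        rw [Real.norm_eq_abs, abs_of_nonneg (le_min (abs_nonneg _) hx)]
        exact min_le_right _ _)
      (by
        filter_upwards [hlim, hG0] with x hx hx0
        simpa [D, min_eq_left hx0] using
          ((hx.sub_const (f x)).abs).min (tendsto_const_nhds (x := G x)))
    simpa using this
  rw [tendsto_iff_norm_sub_tendsto_zero]
  refine squeeze_zero (fun _ => norm_nonneg _) (fun k => ?_) (by simpa using hDlim.add hHlim)
  rw [← integral_sub (hF k) hf, ← integral_add (hD k) (hH k)]
  refine (norm_integral_le_integral_norm _).trans (integral_mono_ae ((hF k).sub hf).norm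
    ((hD k).add (hH k)) ?_)
  filter_upwards [hle k, hH0 k] with x hx hx0
  show |F k x - f x| ≤ min |F k x - f x| (G x) + H k x
  rw [← min_add_add_right]
  exact le_min (le_add_of_nonneg_right hx0) hx

end Integrals

theorem rpow_le_one_add_rpow {a r q : ℝ} (ha : 0 ≤ a) (hr : 0 ≤ r) (hrq : r ≤ q) :
    a ^ r ≤ 1 + a ^ q := by
  rcases le_total a 1 with h | h
  · linarith [Real.rpow_le_one ha h hr, Real.rpow_nonneg ha q]
  · linarith [Real.rpow_le_rpow_of_exponent_le h hrq]

theorem abs_rpow_le_two_rpow_mul (a b : ℝ) {s q : ℝ} (hs : 0 ≤ s) (hsq : s ≤ q) :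
    |a| ^ s ≤ 2 ^ s * (1 + |b| ^ q + |a - b| ^ q) := by
  set t := max |a - b| |b|
  have ht : |a| ≤ 2 * t := by
    linarith [abs_sub_abs_le_abs_sub a b, le_max_left |a - b| |b|, le_max_right |a - b| |b|]
  have htq : t ^ q ≤ |b| ^ q + |a - b| ^ q := by
    rcases max_choice |a - b| |b| with h | h <;> simp only [t, h] <;>
      linarith [Real.rpow_nonneg (abs_nonneg (a - b)) q, Real.rpow_nonneg (abs_nonneg b) q]
  have ht0 : 0 ≤ t := (abs_nonneg b).trans (le_max_right _ _)
  calc |a| ^ s ≤ (2 * t) ^ s := Real.rpow_le_rpow (abs_nonneg a) ht hs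
    _ = 2 ^ s * t ^ s := Real.mul_rpow zero_le_two ht0
    _ ≤ 2 ^ s * (1 + t ^ q) := by gcongr; exact rpow_le_one_add_rpow ht0 hs hsq
    _ ≤ 2 ^ s * (1 + |b| ^ q + |a - b| ^ q) :=
        mul_le_mul_of_nonneg_left (by linarith) (by positivity)

theorem exists_abs_sub_le_of_abs_le_rpow_add {g : ℝ → ℝ} {A B s q : ℝ} (hA : 0 ≤ A)
    (hs : 0 ≤ s) (hsq : s ≤ q) (hg : ∀ v, |g v| ≤ A * |v| ^ s + B) :
    ∃ C, 0 ≤ C ∧ ∀ a b, |g a - g b| ≤ C * (1 + |b| ^ q + |a - b| ^ q) := by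
  refine ⟨A * (2 ^ s + 1) + 2 * |B|, by positivity, fun a b => ?_⟩
  set X := 1 + |b| ^ q + |a - b| ^ q
  have hbq := Real.rpow_nonneg (abs_nonneg b) q
  have habq := Real.rpow_nonneg (abs_nonneg (a - b)) q
  have hX : 1 ≤ X := by linarith
  have hb : |b| ^ s ≤ X := by linarith [rpow_le_one_add_rpow (abs_nonneg b) hs hsq]
  calc |g a - g b| ≤ |g a| + |g b| := abs_sub _ _
    _ ≤ A * |a| ^ s + A * |b| ^ s + 2 * |B| := by linarith [hg a, hg b, le_abs_self B]
    _ ≤ A * (2 ^ s * X) + A * X + 2 * |B| * X :=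
        add_le_add (add_le_add (mul_le_mul_of_nonneg_left (abs_rpow_le_two_rpow_mul a b hs hsq) hA)
          (mul_le_mul_of_nonneg_left hb hA)) (le_mul_of_one_le_right (by positivity) hX)
    _ = (A * (2 ^ s + 1) + 2 * |B|) * X := by ring

section Nemytskii

variable {α : Type*} [MeasurableSpace α] {μ : Measure α} [IsFiniteMeasure μ] {g : ℝ → ℝ}
  {C q M : ℝ} {φ : α → ℝ}

theorem integrable_comp_mul_of_abs_sub_le (hg : Continuous g) (hq : 0 < q)
    (hgC : ∀ a b, |g a - g b| ≤ C * (1 + |b| ^ q + |a - b| ^ q)) {u : α → ℝ}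
    (hu : MemLp u (ENNReal.ofReal q) μ) (hφ : AEStronglyMeasurable φ μ) (hφM : ∀ x, |φ x| ≤ M) :
    Integrable (fun x => g (u x) * φ x) μ := by
  refine Integrable.mono' (((integrable_const (|g 0| + C)).add
    ((hu.integrable_abs_rpow hq.le).const_mul C)).mul_const M)
    ((hg.comp_aestronglyMeasurable hu.1).mul hφ) (Eventually.of_forall fun x => ?_)
  have hgu : |g (u x)| ≤ |g 0| + C + C * |u x| ^ q := by
    have := hgC (u x) 0
    rw [abs_zero, Real.zero_rpow hq.ne', sub_zero] at this
    linarith [abs_sub_abs_le_abs_sub (g (u x)) (g 0)]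
  rw [Real.norm_eq_abs, abs_mul]
  exact mul_le_mul hgu (hφM x) (abs_nonneg _) ((abs_nonneg _).trans hgu)

theorem tendsto_integral_comp_mul_of_abs_sub_le (hg : Continuous g) (hC : 0 ≤ C) (hq : 0 < q)
    (hgC : ∀ a b, |g a - g b| ≤ C * (1 + |b| ^ q + |a - b| ^ q)) {u : ℕ → α → ℝ} {u₀ : α → ℝ}
    (hu : ∀ k, MemLp (u k) (ENNReal.ofReal q) μ) (hu₀ : MemLp u₀ (ENNReal.ofReal q) μ)
    (hae : ∀ᵐ x ∂μ, Tendsto (fun k => u k x) atTop (𝓝 (u₀ x)))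
    (hconv : Tendsto (fun k => ∫ x, |u k x - u₀ x| ^ q ∂μ) atTop (𝓝 0))
    (hφ : AEStronglyMeasurable φ μ) (hφM : ∀ x, |φ x| ≤ M) :
    Tendsto (fun k => ∫ x, g (u k x) * φ x ∂μ) atTop (𝓝 (∫ x, g (u₀ x) * φ x ∂μ)) := by
  have hM : ∀ x, 0 ≤ M := fun x => (abs_nonneg _).trans (hφM x)
  refine tendsto_integral_of_abs_sub_le_add (G := fun x => C * M * (1 + |u₀ x| ^ q))
    (H := fun k x => C * M * |u k x - u₀ x| ^ q)
    (fun k => integrable_comp_mul_of_abs_sub_le hg hq hgC (hu k) hφ hφM)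
    (integrable_comp_mul_of_abs_sub_le hg hq hgC hu₀ hφ hφM)
    (((integrable_const 1).add (hu₀.integrable_abs_rpow hq.le)).const_mul _)
    (Eventually.of_forall fun x => by have := hM x; positivity)
    (fun k => (((hu k).sub hu₀).integrable_abs_rpow hq.le).const_mul _)
    (fun k => Eventually.of_forall fun x => by have := hM x; positivity)
    (fun k => Eventually.of_forall fun x => ?_) ?_
    (by simpa [integral_const_mul] using hconv.const_mul (C * M))
  · rw [← sub_mul, abs_mul]
    calc |g (u k x) - g (u₀ x)| * |φ x| ≤ C * (1 + |u₀ x| ^ q + |u k x - u₀ x| ^ q) * M :=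
          mul_le_mul (hgC _ _) (hφM x) (abs_nonneg _) (by positivity)
      _ = _ := by ring
  · filter_upwards [hae] with x hx
    exact ((hg.tendsto _).comp hx).mul_const _

end Nemytskii

theorem Continuous.memLp_restrict_of_isBounded {X E : Type*} [PseudoMetricSpace X] [ProperSpace X]
    [MeasurableSpace X] [OpensMeasurableSpace X] {μ : Measure X} [IsFiniteMeasureOnCompacts μ]
    [NormedAddCommGroup E] {f : X → E} (hf : Continuous f) {s : Set X}
    (hs : Bornology.IsBounded s) (p : ENNReal) : MemLp f p (μ.restrict s) := by
  have hK : IsCompact (closure s) := hs.isCompact_closure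
  have : IsFiniteMeasure (μ.restrict (closure s)) :=
    isFiniteMeasure_restrict.2 hK.measure_lt_top.ne
  obtain ⟨C, hC⟩ := hK.exists_bound_of_continuousOn hf.continuousOn
  have hbound := ae_restrict_of_forall_mem (μ := μ) isClosed_closure.measurableSet hC
  exact ((memLp_top_of_bound hf.aestronglyMeasurable C hbound).mono_exponent le_top).mono_measure
    (Measure.restrict_mono subset_closure le_rfl)

section WeakForm

variable {α : Type*} [MeasurableSpace α] {μ : Measure α} [IsFiniteMeasure μ] {g : ℝ → ℝ}
  {C q Mψ Mφ : ℝ} {ψ φ : α → ℝ}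

theorem tendsto_integral_neg_mul_add_comp_mul (hg : Continuous g) (hC : 0 ≤ C) (hq : 1 ≤ q)
    (hgC : ∀ a b, |g a - g b| ≤ C * (1 + |b| ^ q + |a - b| ^ q)) {u : ℕ → α → ℝ} {u₀ : α → ℝ}
    (hu : ∀ k, MemLp (u k) (ENNReal.ofReal q) μ) (hu₀ : MemLp u₀ (ENNReal.ofReal q) μ)
    (hae : ∀ᵐ x ∂μ, Tendsto (fun k => u k x) atTop (𝓝 (u₀ x)))
    (hconv : Tendsto (fun k => ∫ x, |u k x - u₀ x| ^ q ∂μ) atTop (𝓝 0))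
    (hψ : AEStronglyMeasurable ψ μ) (hψM : ∀ x, |ψ x| ≤ Mψ)
    (hφ : AEStronglyMeasurable φ μ) (hφM : ∀ x, |φ x| ≤ Mφ) :
    Tendsto (fun k => ∫ x, (-(u k x) * ψ x + g (u k x) * φ x) ∂μ) atTop
      (𝓝 (∫ x, (-(u₀ x) * ψ x + g (u₀ x) * φ x) ∂μ)) := by
  have hq0 : 0 < q := by linarith
  have hid : ∀ a b : ℝ, |id a - id b| ≤ 1 * (1 + |b| ^ q + |a - b| ^ q) := fun a b => by
    have := rpow_le_one_add_rpow (abs_nonneg (a - b)) zero_le_one hq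
    rw [Real.rpow_one] at this
    simp only [id, one_mul]
    linarith [Real.rpow_nonneg (abs_nonneg b) q]
  have hsplit : ∀ v : α → ℝ, MemLp v (ENNReal.ofReal q) μ →
      ∫ x, (-(v x) * ψ x + g (v x) * φ x) ∂μ = -∫ x, id (v x) * ψ x ∂μ + ∫ x, g (v x) * φ x ∂μ :=
    fun v hv => by
      rw [← integral_neg, ← integral_add
        (integrable_comp_mul_of_abs_sub_le continuous_id hq0 hid hv hψ hψM).fun_neg
        (integrable_comp_mul_of_abs_sub_le hg hq0 hgC hv hφ hφM)]
      simp only [id, neg_mul]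
  simp only [hsplit _ (hu _), hsplit _ hu₀]
  exact (tendsto_integral_comp_mul_of_abs_sub_le continuous_id zero_le_one hq0 hid hu hu₀ hae
    hconv hψ hψM).neg.add
    (tendsto_integral_comp_mul_of_abs_sub_le hg hC hq0 hgC hu hu₀ hae hconv hφ hφM)

end WeakForm

theorem stmt_16_general (n : ℕ) (ℓ : ℝ)
    (Q : Set (Fin (n - 1) → ℝ)) (hQb : Bornology.IsBounded Q)
    (p C₁ C₃' : ℝ) (hp : 2 ≤ p) (hC₁ : 0 < C₁)
    (W : ℝ → ℝ) (hW : ContDiff ℝ 1 W)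
    (hW' : ∀ v : ℝ, |deriv W v| ≤ C₁ * p * |v| ^ (p - 1) + C₃')
    (uk : ℕ → (Fin (n - 1) → ℝ) × ℝ → ℝ) (huk : ∀ k, ContDiff ℝ 2 (uk k))
    (ustar : (Fin (n - 1) → ℝ) × ℝ → ℝ) (hustar : Measurable ustar)
    (q : ℝ) (hq : q = max 2 (p - 1))
    (hLq : IntegrableOn (fun x => |ustar x| ^ q) (Q ×ˢ Set.Ioo (-ℓ) ℓ))
    (hae : ∀ᵐ x ∂(volume.restrict (Q ×ˢ Set.Ioo (-ℓ) ℓ)),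
      Tendsto (fun k => uk k x) atTop (nhds (ustar x)))
    (hconv : Tendsto (fun k => ∫ x in Q ×ˢ Set.Ioo (-ℓ) ℓ, |uk k x - ustar x| ^ q)
      atTop (nhds 0))
    (hres : Tendsto (fun k => l2norm (Q ×ˢ Set.Ioo (-ℓ) ℓ)
        (fun x => -(pdz (fun y => pdz (uk k) y) x) + deriv W (uk k x)))
      atTop (nhds 0)) :
    ∀ φ : (Fin (n - 1) → ℝ) × ℝ → ℝ, ContDiff ℝ 2 φ → HasCompactSupport φ →
      tsupport φ ⊆ Q ×ˢ Set.Ioo (-ℓ) ℓ →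
      (∫ x in Q ×ˢ Set.Ioo (-ℓ) ℓ,
        (-(ustar x) * pdz (fun y => pdz φ y) x + deriv W (ustar x) * φ x)) = 0 := by
  intro φ hφ hφc hφΩ
  set Ω := Q ×ˢ Set.Ioo (-ℓ) ℓ
  have hΩ : Bornology.IsBounded Ω := hQb.prod (Metric.isBounded_Ioo _ _)
  have : IsFiniteMeasure (volume.restrict Ω) := isFiniteMeasure_restrict.2 hΩ.measure_lt_top.ne
  have hq1 : 1 ≤ q := by linarith [le_max_left 2 (p - 1)]
  have hW'c : Continuous (deriv W) := hW.continuous_deriv le_rfl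
  obtain ⟨C, hC0, hC⟩ := exists_abs_sub_le_of_abs_le_rpow_add (by positivity) (by linarith)
    (hq ▸ le_max_right 2 (p - 1)) hW'
  have hus : MemLp ustar (ENNReal.ofReal q) (volume.restrict Ω) := by
    refine (integrable_norm_rpow_iff hustar.aestronglyMeasurable (by simp; linarith) (by simp)).1 ?_
    simp only [ENNReal.toReal_ofReal (by linarith : (0 : ℝ) ≤ q), Real.norm_eq_abs]
    exact hLq
  have hψ : Continuous (pdz (pdz φ)) := continuous_pdz (contDiff_pdz hφ)
  obtain ⟨Mψ, hMψ⟩ := hψ.bounded_above_of_compact_support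
    (hasCompactSupport_pdz (hasCompactSupport_pdz hφc))
  obtain ⟨Mφ, hMφ⟩ := hφ.continuous.bounded_above_of_compact_support hφc
  have hlim := tendsto_integral_neg_mul_add_comp_mul hW'c hC0 hq1 hC
    (fun k => (huk k).continuous.memLp_restrict_of_isBounded hΩ _) hus hae hconv
    hψ.aestronglyMeasurable hMψ hφ.continuous.aestronglyMeasurable hMφ
  have hlim0 : Tendsto (fun k => ∫ x in Ω, (-(uk k x) * pdz (pdz φ) x + deriv W (uk k x) * φ x))
      atTop (𝓝 0) := by
    simp only [setIntegral_neg_mul_pdz_pdz_add_comp_mul (huk _) hφ hφc hφΩ hW'c]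
    refine squeeze_zero_norm (fun k => abs_integral_mul_le_sqrt_mul_sqrt ?_ ?_)
      (by simpa only [l2norm, zero_mul] using hres.mul_const (l2norm Ω φ))
    · exact ((continuous_pdz (contDiff_pdz (huk k))).neg.add
        (hW'c.comp (huk k).continuous)).memLp_restrict_of_isBounded hΩ _
    · exact hφ.continuous.memLp_restrict_of_isBounded hΩ _
  exact tendsto_nhds_unique hlim hlim0

/-- the limit `u*` of an `L^q`-convergent sequence with vanishing bilayer
residual is a distributional solution of the bilayer equation `∂²u/∂z² = W'(u)`. -/
theorem stmt_16 (n : ℕ) (hn : 2 ≤ n) (ℓ : ℝ) (hℓ : 0 < ℓ)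
    (Q : Set (Fin (n - 1) → ℝ)) (hQo : IsOpen Q) (hQb : Bornology.IsBounded Q)
    (p C₁ C₃' : ℝ) (hp : 2 ≤ p) (hC₁ : 0 < C₁)
    (W : ℝ → ℝ) (hW : ContDiff ℝ 1 W)
    (hW' : ∀ v : ℝ, |deriv W v| ≤ C₁ * p * |v| ^ (p - 1) + C₃')
    (uk : ℕ → (Fin (n - 1) → ℝ) × ℝ → ℝ) (huk : ∀ k, ContDiff ℝ 2 (uk k))
    (ustar : (Fin (n - 1) → ℝ) × ℝ → ℝ) (hustar : Measurable ustar)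
    (q : ℝ) (hq : q = max 2 (p - 1))
    (hLq : IntegrableOn (fun x => |ustar x| ^ q) (Q ×ˢ Set.Ioo (-ℓ) ℓ))
    (hae : ∀ᵐ x ∂(volume.restrict (Q ×ˢ Set.Ioo (-ℓ) ℓ)),
      Tendsto (fun k => uk k x) atTop (nhds (ustar x)))
    (hconv : Tendsto (fun k => ∫ x in Q ×ˢ Set.Ioo (-ℓ) ℓ, |uk k x - ustar x| ^ q)
      atTop (nhds 0))
    (hres : Tendsto (fun k => l2norm (Q ×ˢ Set.Ioo (-ℓ) ℓ)
        (fun x => -(pdz (fun y => pdz (uk k) y) x) + deriv W (uk k x)))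
      atTop (nhds 0)) :
    ∀ φ : (Fin (n - 1) → ℝ) × ℝ → ℝ, ContDiff ℝ 2 φ → HasCompactSupport φ →
      tsupport φ ⊆ Q ×ˢ Set.Ioo (-ℓ) ℓ →
      (∫ x in Q ×ˢ Set.Ioo (-ℓ) ℓ,
        (-(ustar x) * pdz (fun y => pdz φ y) x + deriv W (ustar x) * φ x)) = 0 :=
  stmt_16_general n ℓ Q hQb p C₁ C₃' hp hC₁ W hW hW' uk huk ustar hustar q hq hLq hae hconv hres
end
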